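/- arXiv:2510.20608 — 5 statements merged into one kernel-verified Lean document; each statement's English description precedes it below -/
import Mathlib

section
/- Let g(x) = (1/n)∑ᵢ vᵢ ∇fᵢ(x) with random weights vᵢ satisfying E[vᵢ] = 1, E[vᵢ²] = 1 − 1/τ + 1/(τ qᵢ), and E[vᵢvⱼ] = 1 − 1/τ for i ≠ j. Then E‖g(x)‖² = (1 − 1/τ)‖∇f(x)‖² + (1/(τ n²))∑ᵢ (1/qᵢ)‖∇fᵢ(x)‖², where ∇f(x) = (1/n)∑ᵢ ∇fᵢ(x). -/
open MeasureTheory ProbabilityTheory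

open scoped InnerProductSpace

/-! Expanding the square, `E‖∑ vᵢ gᵢ‖² = ∑ᵢⱼ E[vᵢvⱼ] ⟪gᵢ, gⱼ⟫`. Since the second moments are a
constant `1 - 1/τ` plus a diagonal correction, the double sum splits into `(1 - 1/τ)‖∑ gᵢ‖²`
and the diagonal terms `∑ (1/(τ qᵢ)) ‖gᵢ‖²`. -/

section

variable {ι E : Type*} [Fintype ι] [NormedAddCommGroup E] [InnerProductSpace ℝ E]

theorem norm_sum_smul_sq (a : ι → ℝ) (g : ι → E) :
    ‖∑ i, a i • g i‖ ^ 2 = ∑ i, ∑ j, a i * a j * ⟪g i, g j⟫_ℝ := by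
  rw [← real_inner_self_eq_norm_sq, sum_inner]
  refine Finset.sum_congr rfl fun i _ => ?_
  simp only [inner_sum, real_inner_smul_left, real_inner_smul_right]
  exact Finset.sum_congr rfl fun j _ => by ring

theorem integral_norm_sum_smul_sq {Ω : Type*} [MeasurableSpace Ω] {μ : Measure Ω}
    {v : ι → Ω → ℝ} (hv : ∀ i, MemLp (v i) 2 μ) (g : ι → E) :
    ∫ ω, ‖∑ i, v i ω • g i‖ ^ 2 ∂μ = ∑ i, ∑ j, (∫ ω, v i ω * v j ω ∂μ) * ⟪g i, g j⟫_ℝ := by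
  have hint : ∀ i j, Integrable (fun ω => v i ω * v j ω * ⟪g i, g j⟫_ℝ) μ :=
    fun i j => ((hv i).integrable_mul (hv j)).mul_const _
  simp_rw [norm_sum_smul_sq]
  rw [integral_finsetSum _ fun i _ => integrable_finsetSum _ fun j _ => hint i j]
  refine Finset.sum_congr rfl fun i _ => ?_
  rw [integral_finsetSum _ fun j _ => hint i j]
  simp only [integral_mul_const]

theorem sum_sum_mul_inner_of_const_offDiag {m : ι → ι → ℝ} {c : ℝ} {s : ι → ℝ}
    (hdiag : ∀ i, m i i = c + s i) (hoff : ∀ i j, i ≠ j → m i j = c) (g : ι → E) :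
    ∑ i, ∑ j, m i j * ⟪g i, g j⟫_ℝ = c * ‖∑ i, g i‖ ^ 2 + ∑ i, s i * ‖g i‖ ^ 2 := by
  classical
  have hm : ∀ i j, m i j = c + if i = j then s i else 0 := by
    intro i j
    by_cases h : i = j
    · subst h; simp [hdiag]
    · simp [hoff i j h, h]
  rw [← real_inner_self_eq_norm_sq, sum_inner]
  simp only [hm, add_mul, Finset.sum_add_distrib, ite_mul, zero_mul, Finset.sum_ite_eq,
    Finset.mem_univ, if_true, ← Finset.mul_sum, inner_sum, real_inner_self_eq_norm_sq]

end

theorem second_moment_with_replacement_general {Ω : Type*} [MeasureSpace Ω]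
    {d : ℕ}
    (n τ : ℕ)
    (q : Fin n → ℝ)
    (f : Fin n → EuclideanSpace ℝ (Fin d) → ℝ)
    (v : Fin n → Ω → ℝ)
    (hv2 : ∀ i, MemLp (v i) 2 ℙ)
    (hsq : ∀ i, ∫ ω, (v i ω) ^ 2 = 1 - 1 / τ + 1 / (τ * q i))
    (hcross : ∀ i j, i ≠ j → ∫ ω, v i ω * v j ω = 1 - 1 / τ)
    (x : EuclideanSpace ℝ (Fin d)) :
    ∫ ω, ‖(n : ℝ)⁻¹ • ∑ i, v i ω • gradient (f i) x‖ ^ 2 =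
      (1 - 1 / τ) * ‖(n : ℝ)⁻¹ • ∑ i, gradient (f i) x‖ ^ 2 +
        (1 / (τ * n ^ 2)) * ∑ i, (1 / q i) * ‖gradient (f i) x‖ ^ 2 := by
  have hdiag : ∀ i, ∫ ω, v i ω * v i ω = 1 - 1 / τ + 1 / (τ * q i) := fun i => by
    simp only [← sq, hsq]
  simp_rw [Finset.smul_sum, smul_comm _ (v _ _), integral_norm_sum_smul_sq hv2,
    sum_sum_mul_inner_of_const_offDiag hdiag hcross, norm_smul, mul_pow, Finset.mul_sum]
  congr 1
  refine Finset.sum_congr rfl fun i _ => ?_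
  simp only [norm_inv, RCLike.norm_natCast]
  ring

theorem second_moment_with_replacement {Ω : Type*} [MeasureSpace Ω]
    [IsProbabilityMeasure (ℙ : Measure Ω)] {d : ℕ}
    (n τ : ℕ) (hn : 0 < n) (hτ : 1 ≤ τ)
    (q : Fin n → ℝ) (hq : ∀ i, 0 < q i)
    (f : Fin n → EuclideanSpace ℝ (Fin d) → ℝ)
    (hdiff : ∀ i x, DifferentiableAt ℝ (f i) x)
    (v : Fin n → Ω → ℝ)
    (hv2 : ∀ i, MemLp (v i) 2 ℙ)
    (hmean : ∀ i, ∫ ω, v i ω = 1)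
    (hsq : ∀ i, ∫ ω, (v i ω) ^ 2 = 1 - 1 / τ + 1 / (τ * q i))
    (hcross : ∀ i j, i ≠ j → ∫ ω, v i ω * v j ω = 1 - 1 / τ)
    (x : EuclideanSpace ℝ (Fin d)) :
    ∫ ω, ‖(n : ℝ)⁻¹ • ∑ i, v i ω • gradient (f i) x‖ ^ 2 =
      (1 - 1 / τ) * ‖(n : ℝ)⁻¹ • ∑ i, gradient (f i) x‖ ^ 2 +
        (1 / (τ * n ^ 2)) * ∑ i, (1 / q i) * ‖gradient (f i) x‖ ^ 2 :=
  second_moment_with_replacement_general n τ q f v hv2 hsq hcross x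
end

section
/- Suppose each fᵢ is Lᵢ-smooth and bounded below by fᵢ^inf, f = (1/n)∑ᵢ fᵢ has infimum f⋆, and Δ = (1/n)∑ᵢ(f⋆ − fᵢ^inf). Then for all x, (1/(τ n²))∑ᵢ (1/qᵢ)‖∇fᵢ(x)‖² ≤ 2A(f(x) − f⋆) + 2AΔ, where A = maxᵢ Lᵢ/(τ n qᵢ). -/
/-! The descent lemma `f y ≤ f x + ⟪∇ f x, y - x⟫ + L / 2 * ‖y - x‖ ^ 2` for an `L`-smooth `f`,
evaluated at the gradient step `y = x - L⁻¹ • ∇ f x`, combined with `fᵢ^inf ≤ fᵢ y` gives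
`‖∇ fᵢ x‖ ^ 2 ≤ 2 Lᵢ (fᵢ x - fᵢ^inf)`. Multiplying by `1 / (τ n² qᵢ)` and bounding
`Lᵢ / (τ n qᵢ) ≤ A` termwise, the sum becomes `2 A (f x - f⋆) + 2 A Δ`. -/

open scoped InnerProductSpace Gradient

section LipschitzGradient

variable {E : Type*} [NormedAddCommGroup E] [InnerProductSpace ℝ E] [CompleteSpace E]
  {f : E → ℝ} {L : ℝ}

theorem Differentiable.hasDerivAt_comp_add_smul (hf : Differentiable ℝ f) (x v : E) (t : ℝ) :
    HasDerivAt (fun s : ℝ => f (x + s • v)) ⟪∇ f (x + t • v), v⟫_ℝ t := by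
  have hline : HasDerivAt (fun s : ℝ => x + s • v) v t := by
    simpa using ((hasDerivAt_id t).smul_const v).const_add x
  have h := (hf _).hasGradientAt.hasFDerivAt.comp_hasDerivAt t hline
  rwa [InnerProductSpace.toDual_apply_apply] at h

theorem le_add_inner_gradient_add_half_mul_sq (hf : Differentiable ℝ f)
    (hlip : ∀ x y, ‖∇ f x - ∇ f y‖ ≤ L * ‖x - y‖) (x y : E) :
    f y ≤ f x + ⟪∇ f x, y - x⟫_ℝ + L / 2 * ‖y - x‖ ^ 2 := by
  set v := y - x
  set φ : ℝ → ℝ := fun t => f (x + t • v) - t * ⟪∇ f x, v⟫_ℝ - L / 2 * ‖v‖ ^ 2 * t ^ 2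
  have hφ' : ∀ t, HasDerivAt φ (⟪∇ f (x + t • v) - ∇ f x, v⟫_ℝ - L * ‖v‖ ^ 2 * t) t := by
    intro t
    have h := ((hf.hasDerivAt_comp_add_smul x v t).sub
      ((hasDerivAt_id t).mul_const ⟪∇ f x, v⟫_ℝ)).sub
      ((hasDerivAt_pow 2 t).const_mul (L / 2 * ‖v‖ ^ 2))
    refine h.congr_deriv ?_
    rw [inner_sub_left]
    ring
  have hφ'_nonpos : ∀ t ∈ interior (Set.Icc (0 : ℝ) 1),
      ⟪∇ f (x + t • v) - ∇ f x, v⟫_ℝ - L * ‖v‖ ^ 2 * t ≤ 0 := by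
    intro t ht
    rw [interior_Icc] at ht
    have hgrad : ‖∇ f (x + t • v) - ∇ f x‖ ≤ L * (t * ‖v‖) := by
      simpa [norm_smul, abs_of_pos ht.1] using hlip (x + t • v) x
    refine sub_nonpos.mpr ?_
    calc ⟪∇ f (x + t • v) - ∇ f x, v⟫_ℝ ≤ ‖∇ f (x + t • v) - ∇ f x‖ * ‖v‖ :=
          real_inner_le_norm _ _
      _ ≤ L * (t * ‖v‖) * ‖v‖ := by gcongr
      _ = L * ‖v‖ ^ 2 * t := by ring
  have hanti : AntitoneOn φ (Set.Icc 0 1) :=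
    antitoneOn_of_deriv_nonpos (convex_Icc 0 1)
      (fun t _ => (hφ' t).continuousAt.continuousWithinAt)
      (fun t _ => (hφ' t).differentiableAt.differentiableWithinAt)
      (fun t ht => (hφ' t).deriv ▸ hφ'_nonpos t ht)
  have h := hanti (by simp) (by simp) zero_le_one
  simp only [φ, v, one_smul, zero_smul, add_zero, add_sub_cancel, one_mul, one_pow, mul_one,
    zero_mul, sub_zero, ne_eq, OfNat.ofNat_ne_zero, not_false_eq_true, zero_pow, mul_zero] at h
  linarith

theorem sq_norm_gradient_le_two_mul_sub_of_le (hf : Differentiable ℝ f)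
    (hlip : ∀ x y, ‖∇ f x - ∇ f y‖ ≤ L * ‖x - y‖) (hL : 0 < L) {m : ℝ} (hm : ∀ x, m ≤ f x)
    (x : E) : ‖∇ f x‖ ^ 2 ≤ 2 * L * (f x - m) := by
  have hstep := le_add_inner_gradient_add_half_mul_sq hf hlip x (x - L⁻¹ • ∇ f x)
  rw [sub_sub_cancel_left, inner_neg_right, real_inner_smul_right, real_inner_self_eq_norm_sq,
    norm_neg, norm_smul, Real.norm_of_nonneg (inv_nonneg.mpr hL.le)] at hstep
  have hdecr : f x - ‖∇ f x‖ ^ 2 / (2 * L) ≥ m := by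
    refine (hm _).trans (hstep.trans_eq ?_)
    field_simp
    ring
  rw [ge_iff_le, le_sub_comm, div_le_iff₀ (by positivity)] at hdecr
  linarith

end LipschitzGradient

theorem weighted_gradient_sum_bound_general {d n : ℕ} (hn : 0 < n)
    (τ : ℕ)
    (q : Fin n → ℝ) (hq : ∀ i, 0 < q i)
    (f : Fin n → EuclideanSpace ℝ (Fin d) → ℝ)
    (L : Fin n → ℝ) (hL : ∀ i, 0 < L i)
    (hdiff : ∀ i x, DifferentiableAt ℝ (f i) x)
    (hlip : ∀ i x y, ‖gradient (f i) x - gradient (f i) y‖ ≤ L i * ‖x - y‖)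
    (finf : Fin n → ℝ) (hbound : ∀ i x, finf i ≤ f i x)
    (fstar : ℝ)
    (Δ A : ℝ)
    (hΔ : Δ = (n : ℝ)⁻¹ * ∑ i, (fstar - finf i))
    (hA : A = Finset.univ.sup'
      (Finset.univ_nonempty_iff.mpr ⟨⟨0, hn⟩⟩)
      (fun i : Fin n => L i / (τ * n * q i))) :
    ∀ x, (1 / (τ * (n : ℝ) ^ 2)) * ∑ i, (1 / q i) * ‖gradient (f i) x‖ ^ 2 ≤
      2 * A * ((n : ℝ)⁻¹ * ∑ i, f i x - fstar) + 2 * A * Δ := by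
  intro x
  have hA_ge : ∀ i, L i / (τ * n * q i) ≤ A := fun i => by
    rw [hA]
    exact Finset.le_sup' (fun i => L i / (τ * n * q i)) (Finset.mem_univ i)
  have hterm : ∀ i, 1 / (τ * (n : ℝ) ^ 2) * ((1 / q i) * ‖∇ (f i) x‖ ^ 2) ≤
      2 * A * ((n : ℝ)⁻¹ * (f i x - finf i)) := fun i => by
    have hgap : 0 ≤ f i x - finf i := sub_nonneg.mpr (hbound i x)
    have hq_nonneg := (hq i).le
    calc 1 / (τ * (n : ℝ) ^ 2) * ((1 / q i) * ‖∇ (f i) x‖ ^ 2)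
        ≤ 1 / (τ * (n : ℝ) ^ 2) * ((1 / q i) * (2 * L i * (f i x - finf i))) := by
          gcongr
          exact sq_norm_gradient_le_two_mul_sub_of_le (hdiff i) (hlip i) (hL i) (hbound i) x
      _ = 2 * (L i / (τ * n * q i)) * ((n : ℝ)⁻¹ * (f i x - finf i)) := by ring
      _ ≤ 2 * A * ((n : ℝ)⁻¹ * (f i x - finf i)) := by gcongr; exact hA_ge i
  have hn' : (n : ℝ) ≠ 0 := by positivity
  calc (1 / (τ * (n : ℝ) ^ 2)) * ∑ i, (1 / q i) * ‖∇ (f i) x‖ ^ 2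
      = ∑ i, 1 / (τ * (n : ℝ) ^ 2) * ((1 / q i) * ‖∇ (f i) x‖ ^ 2) := Finset.mul_sum ..
    _ ≤ ∑ i, 2 * A * ((n : ℝ)⁻¹ * (f i x - finf i)) := Finset.sum_le_sum fun i _ => hterm i
    _ = 2 * A * ((n : ℝ)⁻¹ * ∑ i, f i x - fstar) + 2 * A * Δ := by
      simp only [hΔ, ← Finset.mul_sum, Finset.sum_sub_distrib, Finset.sum_const, Finset.card_univ,
        Fintype.card_fin, nsmul_eq_mul]
      field_simp
      ring

theorem weighted_gradient_sum_bound {d n : ℕ} (hn : 0 < n)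
    (τ : ℕ) (hτ : 1 ≤ τ)
    (q : Fin n → ℝ) (hq : ∀ i, 0 < q i)
    (f : Fin n → EuclideanSpace ℝ (Fin d) → ℝ)
    (L : Fin n → ℝ) (hL : ∀ i, 0 < L i)
    (hdiff : ∀ i x, DifferentiableAt ℝ (f i) x)
    (hlip : ∀ i x y, ‖gradient (f i) x - gradient (f i) y‖ ≤ L i * ‖x - y‖)
    (finf : Fin n → ℝ) (hbound : ∀ i x, finf i ≤ f i x)
    (fstar : ℝ) (hfstar : ∀ x, fstar ≤ (n : ℝ)⁻¹ * ∑ i, f i x)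
    (Δ A : ℝ)
    (hΔ : Δ = (n : ℝ)⁻¹ * ∑ i, (fstar - finf i))
    (hA : A = Finset.univ.sup'
      (Finset.univ_nonempty_iff.mpr ⟨⟨0, hn⟩⟩)
      (fun i : Fin n => L i / (τ * n * q i))) :
    ∀ x, (1 / (τ * (n : ℝ) ^ 2)) * ∑ i, (1 / q i) * ‖gradient (f i) x‖ ^ 2 ≤
      2 * A * ((n : ℝ)⁻¹ * ∑ i, f i x - fstar) + 2 * A * Δ :=
  weighted_gradient_sum_bound_general hn τ q hq f L hL hdiff hlip finf hbound fstar Δ A hΔ hA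
end

section
/- Under sampling with replacement (batch size τ, probabilities qᵢ), the expected smoothness condition E‖g(x)‖² ≤ 2A(f(x) − f⋆) + B‖∇f(x)‖² + C holds with A = maxᵢ Lᵢ/(τ n qᵢ), B = 1 − 1/τ, C = 2AΔ, where Δ = (1/n)∑ᵢ(f⋆ − fᵢ^inf). -/
/-!
Put `bᵢ = (τ n qᵢ)⁻¹ ∇fᵢ(x)`. The estimator is the sum `∑ₜ b_{Xₜ}` of `τ` independent copies of
`b_X` with `P(X = i) = qᵢ`, so its second moment is `τ E‖b_X‖² + τ(τ - 1) ‖E b_X‖²`. The mean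
`E b_X = ∇f(x)/τ` produces the `B` term. The diagonal term equals `∑ᵢ ‖∇fᵢ(x)‖² / (τ n² qᵢ)`, and
smoothness plus boundedness below give `‖∇fᵢ(x)‖² ≤ 2Lᵢ(fᵢ(x) - fᵢ^inf)` (descent lemma along the
step `-∇fᵢ(x)/Lᵢ`), which bounds it by `2A(f(x) - f⋆ + Δ)`.
-/

open MeasureTheory ProbabilityTheory

section Smooth

variable {E : Type*} [NormedAddCommGroup E] [InnerProductSpace ℝ E] [CompleteSpace E]
  {f : E → ℝ} {L : ℝ}

theorem le_add_inner_gradient_add_of_lipschitz_gradient (hdiff : ∀ x, DifferentiableAt ℝ f x)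
    (hlip : ∀ x y, ‖gradient f x - gradient f y‖ ≤ L * ‖x - y‖) (x u : E) :
    f (x + u) ≤ f x + inner ℝ (gradient f x) u + L / 2 * ‖u‖ ^ 2 := by
  set g := gradient f x
  let φ : ℝ → ℝ := fun t ↦ f (x + t • u) - t * inner ℝ g u - t ^ 2 * (L / 2 * ‖u‖ ^ 2)
  let φ' : ℝ → ℝ := fun t ↦ inner ℝ (gradient f (x + t • u) - g) u - t * (L * ‖u‖ ^ 2)
  have hφ : ∀ t, HasDerivAt φ (φ' t) t := by
    intro t
    have hline : HasDerivAt (fun t : ℝ ↦ x + t • u) u t := by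
      simpa using ((hasDerivAt_id t).smul_const u).const_add x
    have hf : HasDerivAt (fun t ↦ f (x + t • u)) (inner ℝ (gradient f (x + t • u)) u) t := by
      have := (hdiff _).hasGradientAt.hasFDerivAt.comp_hasDerivAt t hline
      rwa [InnerProductSpace.toDual_apply_apply] at this
    refine ((hf.sub ((hasDerivAt_id' t).mul_const (inner ℝ g u))).sub
      ((hasDerivAt_pow 2 t).mul_const (L / 2 * ‖u‖ ^ 2))).congr_deriv ?_
    simp only [φ', inner_sub_left]
    ring
  have hφ'_nonpos : ∀ t, 0 ≤ t → φ' t ≤ 0 := by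
    intro t ht
    have : inner ℝ (gradient f (x + t • u) - g) u ≤ t * (L * ‖u‖ ^ 2) :=
      calc inner ℝ (gradient f (x + t • u) - g) u
          ≤ ‖gradient f (x + t • u) - g‖ * ‖u‖ := real_inner_le_norm _ _
        _ ≤ L * ‖x + t • u - x‖ * ‖u‖ := by gcongr; exact hlip _ _
        _ = t * (L * ‖u‖ ^ 2) := by
          rw [add_sub_cancel_left, norm_smul, Real.norm_of_nonneg ht]; ring
    simp only [φ']
    linarith
  have hanti : AntitoneOn φ (Set.Ici 0) :=
    antitoneOn_of_hasDerivWithinAt_nonpos (convex_Ici 0)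
      (fun t _ ↦ (hφ t).continuousAt.continuousWithinAt)
      (fun t _ ↦ (hφ t).hasDerivWithinAt)
      (fun t ht ↦ hφ'_nonpos t (interior_subset ht))
  have hφ01 := hanti Set.self_mem_Ici (Set.mem_Ici.mpr zero_le_one) zero_le_one
  simp only [φ, zero_smul, one_smul, add_zero] at hφ01
  linarith

theorem norm_sq_gradient_le_of_lipschitz_gradient (hL : 0 < L)
    (hdiff : ∀ x, DifferentiableAt ℝ f x)
    (hlip : ∀ x y, ‖gradient f x - gradient f y‖ ≤ L * ‖x - y‖)
    {m : ℝ} (hm : ∀ x, m ≤ f x) (x : E) :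
    ‖gradient f x‖ ^ 2 ≤ 2 * L * (f x - m) := by
  have hstep := le_add_inner_gradient_add_of_lipschitz_gradient hdiff hlip x
    (-L⁻¹ • gradient f x)
  rw [inner_smul_right, real_inner_self_eq_norm_sq, norm_smul, norm_neg,
    Real.norm_of_nonneg (inv_nonneg.mpr hL.le)] at hstep
  have hdecrease : m ≤ f x - L⁻¹ / 2 * ‖gradient f x‖ ^ 2 := by
    have hsq : L / 2 * (L⁻¹ * ‖gradient f x‖) ^ 2 = L⁻¹ / 2 * ‖gradient f x‖ ^ 2 := by
      field_simp
    linarith [hm (x + -L⁻¹ • gradient f x)]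
  calc ‖gradient f x‖ ^ 2 = 2 * L * (L⁻¹ / 2 * ‖gradient f x‖ ^ 2) := by field_simp
    _ ≤ 2 * L * (f x - m) := by gcongr; linarith

end Smooth

section Gradient

variable {E : Type*} [NormedAddCommGroup E] [InnerProductSpace ℝ E] [CompleteSpace E] {x : E}

theorem HasGradientAt.fun_sum {ι : Type*} {s : Finset ι} {f : ι → E → ℝ} {f' : ι → E}
    (h : ∀ i ∈ s, HasGradientAt (f i) (f' i) x) :
    HasGradientAt (fun y ↦ ∑ i ∈ s, f i y) (∑ i ∈ s, f' i) x := by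
  rw [hasGradientAt_iff_hasFDerivAt, map_sum]
  exact HasFDerivAt.fun_sum fun i hi ↦ (h i hi).hasFDerivAt

theorem HasGradientAt.const_mul {f : E → ℝ} {f' : E} (h : HasGradientAt f f' x) (c : ℝ) :
    HasGradientAt (fun y ↦ c * f y) (c • f') x := by
  rw [hasGradientAt_iff_hasFDerivAt, map_smul]
  exact h.hasFDerivAt.const_mul c

theorem gradient_const_mul_sum {ι : Type*} {s : Finset ι} {f : ι → E → ℝ}
    (hf : ∀ i ∈ s, DifferentiableAt ℝ (f i) x) (c : ℝ) :
    gradient (fun y ↦ c * ∑ i ∈ s, f i y) x = c • ∑ i ∈ s, gradient (f i) x :=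
  ((HasGradientAt.fun_sum fun i hi ↦ (hf i hi).hasGradientAt).const_mul c).gradient

end Gradient

theorem inv_smul_sum_card_fiber_div_smul {ι α E : Type*} [Fintype ι] [Fintype α] [DecidableEq α]
    [AddCommGroup E] [Module ℝ E] (Y : ι → α) (c n : ℝ) (q : α → ℝ) (a : α → E) :
    n⁻¹ • ∑ i, ((Finset.univ.filter fun t ↦ Y t = i).card / (c * q i)) • a i =
      ∑ t, (c * n * q (Y t))⁻¹ • a (Y t) := by
  rw [← Finset.sum_fiberwise' Finset.univ Y fun i ↦ (c * n * q i)⁻¹ • a i, Finset.smul_sum]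
  refine Finset.sum_congr rfl fun i _ ↦ ?_
  rw [Finset.sum_const, ← Nat.cast_smul_eq_nsmul ℝ, smul_smul, smul_smul]
  congr 1
  ring

theorem sum_smul_inv_mul_smul {α E : Type*} [Fintype α] [AddCommGroup E] [Module ℝ E]
    {q : α → ℝ} (hq : ∀ i, q i ≠ 0) (c : ℝ) (a : α → E) :
    ∑ i, q i • (c * q i)⁻¹ • a i = c⁻¹ • ∑ i, a i := by
  rw [Finset.smul_sum]
  refine Finset.sum_congr rfl fun i _ ↦ ?_
  rw [smul_smul]
  field_simp [hq i]

section Sampling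

variable {Ω α : Type*} [MeasurableSpace Ω] {μ : Measure Ω} [IsFiniteMeasure μ]
  [Fintype α] [MeasurableSpace α] [MeasurableSingletonClass α]

theorem integral_comp_eq_sum_measureReal {E : Type*} [NormedAddCommGroup E] [NormedSpace ℝ E]
    [CompleteSpace E]
    {Y : Ω → α} (hY : Measurable Y) (φ : α → E) :
    ∫ ω, φ (Y ω) ∂μ = ∑ i, μ.real (Y ⁻¹' {i}) • φ i := by
  rw [← integral_map hY.aemeasurable Integrable.of_finite.aestronglyMeasurable,
    integral_fintype Integrable.of_finite]
  simp_rw [map_measureReal_apply hY (measurableSet_singleton _)]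

theorem integral_norm_sq_sum_comp_of_pairwise_indepFun {E : Type*} [NormedAddCommGroup E]
    [InnerProductSpace ℝ E] [CompleteSpace E] {ι : Type*} [Fintype ι] {Y : ι → Ω → α}
    (hY : ∀ t, Measurable (Y t)) (hindep : Pairwise fun t s ↦ IndepFun (Y t) (Y s) μ)
    {p : α → ℝ} (hp : ∀ t i, μ.real (Y t ⁻¹' {i}) = p i) (b : α → E) :
    ∫ ω, ‖∑ t, b (Y t ω)‖ ^ 2 ∂μ =
      Fintype.card ι * ∑ i, p i * ‖b i‖ ^ 2 +
        Fintype.card ι * (Fintype.card ι - 1) * ‖∑ i, p i • b i‖ ^ 2 := by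
  classical
  set M := ∑ i, p i * ‖b i‖ ^ 2
  set W := ‖∑ i, p i • b i‖ ^ 2
  have hmean (t : ι) : ∫ ω, b (Y t ω) ∂μ = ∑ i, p i • b i := by
    simp_rw [integral_comp_eq_sum_measureReal (hY t), hp t]
  have hcross (t s : ι) :
      ∫ ω, inner ℝ (b (Y t ω)) (b (Y s ω)) ∂μ = if t = s then M else W := by
    split_ifs with hts
    · subst hts
      simp_rw [real_inner_self_eq_norm_sq, integral_comp_eq_sum_measureReal (hY t)
        (fun i ↦ ‖b i‖ ^ 2), hp t, smul_eq_mul, M]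
    · have := (hindep hts).integral_bilin_comp_comp (hY t).aemeasurable (hY s).aemeasurable
        (Integrable.of_finite (f := b)) (Integrable.of_finite (f := b)) (innerSL ℝ)
      refine this.trans ?_
      rw [hmean, hmean]
      exact real_inner_self_eq_norm_sq _
  have hint (t s : ι) : Integrable (fun ω ↦ inner ℝ (b (Y t ω)) (b (Y s ω))) μ :=
    (Integrable.of_finite (f := fun z : α × α ↦ inner ℝ (b z.1) (b z.2))).comp_measurable
      ((hY t).prodMk (hY s))
  have hrow (t : ι) : ∑ s, (if t = s then M else W) = M + (Fintype.card ι - 1) * W := by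
    have hsplit (s : ι) : (if t = s then M else W) = W + if t = s then M - W else 0 := by
      split_ifs <;> ring
    simp only [hsplit, Finset.sum_add_distrib, Finset.sum_ite_eq, Finset.mem_univ, if_true,
      Finset.sum_const, Finset.card_univ, nsmul_eq_mul]
    ring
  calc ∫ ω, ‖∑ t, b (Y t ω)‖ ^ 2 ∂μ
      = ∫ ω, ∑ t, ∑ s, inner ℝ (b (Y t ω)) (b (Y s ω)) ∂μ := by
        simp_rw [← real_inner_self_eq_norm_sq, sum_inner, inner_sum]
    _ = ∑ t, ∑ s, ∫ ω, inner ℝ (b (Y t ω)) (b (Y s ω)) ∂μ := by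
        rw [integral_finsetSum _ fun t _ ↦ integrable_finsetSum _ fun s _ ↦ hint t s]
        simp_rw [integral_finsetSum _ fun s _ ↦ hint _ s]
    _ = _ := by
        simp only [hcross, hrow, Finset.sum_const, Finset.card_univ, nsmul_eq_mul]
        ring

end Sampling

theorem mul_sum_mul_norm_sq_inv_smul_le {α E : Type*} [Fintype α] [NormedAddCommGroup E]
    [NormedSpace ℝ E] {τ n A : ℝ} (hτ : 0 < τ) (hn : 0 < n) {q L D : α → ℝ} {a : α → E}
    (hq : ∀ i, 0 < q i) (ha : ∀ i, ‖a i‖ ^ 2 ≤ 2 * L i * D i) (hD : ∀ i, 0 ≤ D i)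
    (hA : ∀ i, L i / (τ * n * q i) ≤ A) :
    τ * ∑ i, q i * ‖(τ * n * q i)⁻¹ • a i‖ ^ 2 ≤ 2 * A * (n⁻¹ * ∑ i, D i) := by
  rw [Finset.mul_sum, Finset.mul_sum, Finset.mul_sum]
  refine Finset.sum_le_sum fun i _ ↦ ?_
  have hqi := hq i
  calc τ * (q i * ‖(τ * n * q i)⁻¹ • a i‖ ^ 2) = (τ * n * q i)⁻¹ * n⁻¹ * ‖a i‖ ^ 2 := by
        rw [norm_smul, Real.norm_of_nonneg (by positivity)]
        field_simp
    _ ≤ (τ * n * q i)⁻¹ * n⁻¹ * (2 * L i * D i) := by gcongr; exact ha i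
    _ = 2 * (L i / (τ * n * q i)) * (n⁻¹ * D i) := by ring
    _ ≤ 2 * A * (n⁻¹ * D i) := by have := hD i; gcongr; exact hA i

theorem es_sampling_with_replacement_general {Ω : Type*} [MeasureSpace Ω]
    [IsProbabilityMeasure (ℙ : Measure Ω)] {d n : ℕ} (hn : 0 < n)
    (τ : ℕ) (hτ : 1 ≤ τ)
    (q : Fin n → ℝ) (hq : ∀ i, 0 < q i)
    (f : Fin n → EuclideanSpace ℝ (Fin d) → ℝ)
    (L : Fin n → ℝ) (hL : ∀ i, 0 < L i)
    (hdiff : ∀ i x, DifferentiableAt ℝ (f i) x)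
    (hlip : ∀ i x y, ‖gradient (f i) x - gradient (f i) y‖ ≤ L i * ‖x - y‖)
    (finf : Fin n → ℝ) (hbound : ∀ i x, finf i ≤ f i x)
    (F : EuclideanSpace ℝ (Fin d) → ℝ) (hF : ∀ x, F x = (n : ℝ)⁻¹ * ∑ i, f i x)
    (fstar : ℝ)
    (X : Fin τ → Ω → Fin n)
    (hmeas : ∀ t, Measurable (X t))
    (hindep : iIndepFun X ℙ)
    (hdist : ∀ t i, ℙ {ω | X t ω = i} = ENNReal.ofReal (q i))
    (v : Fin n → Ω → ℝ)
    (hv : ∀ i ω, v i ω =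
      ((Finset.univ.filter fun t => X t ω = i).card : ℝ) / (τ * q i))
    (Δ A B C : ℝ)
    (hΔ : Δ = (n : ℝ)⁻¹ * ∑ i, (fstar - finf i))
    (hA : A = Finset.univ.sup'
      (Finset.univ_nonempty_iff.mpr ⟨⟨0, hn⟩⟩)
      (fun i : Fin n => L i / (τ * n * q i)))
    (hB : B = 1 - 1 / τ)
    (hC : C = 2 * A * Δ) :
    ∀ x, ∫ ω, ‖(n : ℝ)⁻¹ • ∑ i, v i ω • gradient (f i) x‖ ^ 2 ≤
      2 * A * (F x - fstar) + B * ‖gradient F x‖ ^ 2 + C := by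
  intro x
  have hτ0 : (0 : ℝ) < τ := by exact_mod_cast hτ
  have hn0 : (0 : ℝ) < n := by exact_mod_cast hn
  set b : Fin n → EuclideanSpace ℝ (Fin d) := fun i ↦ ((τ : ℝ) * n * q i)⁻¹ • gradient (f i) x
  have hsample (ω : Ω) : (n : ℝ)⁻¹ • ∑ i, v i ω • gradient (f i) x = ∑ t, b (X t ω) := by
    simp only [hv]
    exact inv_smul_sum_card_fiber_div_smul (fun t ↦ X t ω) τ n q fun i ↦ gradient (f i) x
  have hlaw (t : Fin τ) (i : Fin n) : (ℙ : Measure Ω).real (X t ⁻¹' {i}) = q i := by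
    rw [measureReal_def, ← ENNReal.toReal_ofReal (hq i).le, ← hdist t i]
    rfl
  have hmean : ∑ i, q i • b i = (τ : ℝ)⁻¹ • gradient F x := by
    rw [sum_smul_inv_mul_smul fun i ↦ (hq i).ne', show F = _ from funext hF,
      gradient_const_mul_sum fun i _ ↦ hdiff i x, smul_smul, mul_inv]
  have hgap : (n : ℝ)⁻¹ * ∑ i, (f i x - finf i) = F x - fstar + Δ := by
    rw [hF, hΔ, Finset.sum_sub_distrib, Finset.sum_sub_distrib, Finset.sum_const,
      Finset.card_univ, Fintype.card_fin, nsmul_eq_mul]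
    field_simp
    ring
  have hsecond : τ * ∑ i, q i * ‖b i‖ ^ 2 ≤ 2 * A * (F x - fstar + Δ) :=
    hgap ▸ mul_sum_mul_norm_sq_inv_smul_le hτ0 hn0 hq
      (fun i ↦ norm_sq_gradient_le_of_lipschitz_gradient (hL i) (hdiff i) (hlip i) (hbound i) x)
      (fun i ↦ sub_nonneg.2 (hbound i x))
      (fun i ↦ hA ▸ Finset.le_sup' (fun i : Fin n ↦ L i / (τ * n * q i)) (Finset.mem_univ i))
  calc ∫ ω, ‖(n : ℝ)⁻¹ • ∑ i, v i ω • gradient (f i) x‖ ^ 2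
      = τ * ∑ i, q i * ‖b i‖ ^ 2 + τ * (τ - 1) * ‖(τ : ℝ)⁻¹ • gradient F x‖ ^ 2 := by
        simp_rw [hsample, integral_norm_sq_sum_comp_of_pairwise_indepFun hmeas
          (fun t s h ↦ hindep.indepFun h) hlaw b, hmean, Fintype.card_fin]
    _ ≤ 2 * A * (F x - fstar + Δ) + τ * (τ - 1) * ‖(τ : ℝ)⁻¹ • gradient F x‖ ^ 2 := by
        gcongr
    _ = 2 * A * (F x - fstar) + B * ‖gradient F x‖ ^ 2 + C := by
        rw [norm_smul, Real.norm_of_nonneg (by positivity), hB, hC]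
        field_simp
        ring

theorem es_sampling_with_replacement {Ω : Type*} [MeasureSpace Ω]
    [IsProbabilityMeasure (ℙ : Measure Ω)] {d n : ℕ} (hn : 0 < n)
    (τ : ℕ) (hτ : 1 ≤ τ)
    (q : Fin n → ℝ) (hq : ∀ i, 0 < q i) (hqsum : ∑ i, q i = 1)
    (f : Fin n → EuclideanSpace ℝ (Fin d) → ℝ)
    (L : Fin n → ℝ) (hL : ∀ i, 0 < L i)
    (hdiff : ∀ i x, DifferentiableAt ℝ (f i) x)
    (hlip : ∀ i x y, ‖gradient (f i) x - gradient (f i) y‖ ≤ L i * ‖x - y‖)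
    (finf : Fin n → ℝ) (hbound : ∀ i x, finf i ≤ f i x)
    (F : EuclideanSpace ℝ (Fin d) → ℝ) (hF : ∀ x, F x = (n : ℝ)⁻¹ * ∑ i, f i x)
    (fstar : ℝ) (hfstar : ∀ x, fstar ≤ F x)
    (X : Fin τ → Ω → Fin n)
    (hmeas : ∀ t, Measurable (X t))
    (hindep : iIndepFun X ℙ)
    (hdist : ∀ t i, ℙ {ω | X t ω = i} = ENNReal.ofReal (q i))
    (v : Fin n → Ω → ℝ)
    (hv : ∀ i ω, v i ω =
      ((Finset.univ.filter fun t => X t ω = i).card : ℝ) / (τ * q i))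
    (Δ A B C : ℝ)
    (hΔ : Δ = (n : ℝ)⁻¹ * ∑ i, (fstar - finf i))
    (hA : A = Finset.univ.sup'
      (Finset.univ_nonempty_iff.mpr ⟨⟨0, hn⟩⟩)
      (fun i : Fin n => L i / (τ * n * q i)))
    (hB : B = 1 - 1 / τ)
    (hC : C = 2 * A * Δ) :
    ∀ x, ∫ ω, ‖(n : ℝ)⁻¹ • ∑ i, v i ω • gradient (f i) x‖ ^ 2 ≤
      2 * A * (F x - fstar) + B * ‖gradient F x‖ ^ 2 + C :=
  es_sampling_with_replacement_general hn τ hτ q hq f L hL hdiff hlip finf hbound F hF fstar X hmeas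
    hindep hdist v hv Δ A B C hΔ hA hB hC
end

section
/- One-step descent under ES: if f is L-smooth, x' = x − η g where E[g] = ∇f(x) and E‖g‖² ≤ 2A(f(x) − f⋆) + B‖∇f(x)‖² + C, then E[f(x')] ≤ f(x) − η(1 − LBη/2)‖∇f(x)‖² + LAη²(f(x) − f⋆) + (Lη²/2)C. -/
open MeasureTheory ProbabilityTheory

/-! Along the segment from `x` to `y`, the gap between `f` and its linearization at `x` has
derivative bounded by `L t ‖y - x‖²`, so it stays within `L/2 ‖y - x‖²` of zero. Applied at
`y = x - η g` and integrated, unbiasedness turns the linear term into `-η ‖∇f x‖²`, and the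
expected-smoothness bound controls the quadratic one. -/

section LipschitzGradient

variable {E : Type*} [NormedAddCommGroup E] [InnerProductSpace ℝ E] [CompleteSpace E]
  {f : E → ℝ} {L : ℝ}

theorem abs_sub_sub_inner_gradient_le (hdiff : ∀ y, DifferentiableAt ℝ f y)
    (hlip : ∀ y z, ‖gradient f y - gradient f z‖ ≤ L * ‖y - z‖) (x y : E) :
    |f y - f x - inner ℝ (gradient f x) (y - x)| ≤ L / 2 * ‖y - x‖ ^ 2 := by
  set v := y - x
  let φ : ℝ → ℝ := fun t => f (x + t • v) - f x - t * inner ℝ (gradient f x) v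
  have hφ : ∀ t, HasDerivAt φ (inner ℝ (gradient f (x + t • v) - gradient f x) v) t := by
    intro t
    have hpath : HasDerivAt (fun t : ℝ => x + t • v) v t := by
      simpa using ((hasDerivAt_id t).smul_const v).const_add x
    have hcomp := (hdiff (x + t • v)).hasGradientAt.hasFDerivAt.comp_hasDerivAt t hpath
    rw [InnerProductSpace.toDual_apply_apply] at hcomp
    rw [inner_sub_left]
    exact ((hcomp.sub_const (f x)).sub
      ((hasDerivAt_id t).mul_const (inner ℝ (gradient f x) v))).congr_deriv (by simp)
  have hB : ∀ t, HasDerivAt (fun t : ℝ => L / 2 * ‖v‖ ^ 2 * t ^ 2) (L * ‖v‖ ^ 2 * t) t := by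
    intro t
    exact ((hasDerivAt_pow 2 t).const_mul (L / 2 * ‖v‖ ^ 2)).congr_deriv (by ring)
  have hbound : ∀ t ∈ Set.Ico (0 : ℝ) 1,
      ‖inner ℝ (gradient f (x + t • v) - gradient f x) v‖ ≤ L * ‖v‖ ^ 2 * t := by
    rintro t ⟨ht, -⟩
    calc ‖inner ℝ (gradient f (x + t • v) - gradient f x) v‖
        ≤ ‖gradient f (x + t • v) - gradient f x‖ * ‖v‖ := norm_inner_le_norm _ _
      _ ≤ L * ‖t • v‖ * ‖v‖ := by
          gcongr
          simpa using hlip (x + t • v) x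
      _ = L * ‖v‖ ^ 2 * t := by
          rw [norm_smul, Real.norm_of_nonneg ht]
          ring
  have key := image_norm_le_of_norm_deriv_right_le_deriv_boundary
    (fun t _ => (hφ t).continuousAt.continuousWithinAt) (fun t _ => (hφ t).hasDerivWithinAt)
    (by simp [φ]) hB hbound (Set.right_mem_Icc.2 zero_le_one)
  simpa [φ, v] using key

theorem abs_comp_sub_smul_sub_le (hdiff : ∀ y, DifferentiableAt ℝ f y)
    (hlip : ∀ y z, ‖gradient f y - gradient f z‖ ≤ L * ‖y - z‖) (x v : E) (η : ℝ) :
    |f (x - η • v) - (f x - η * inner ℝ (gradient f x) v)| ≤ L * η ^ 2 / 2 * ‖v‖ ^ 2 := by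
  have h := abs_sub_sub_inner_gradient_le hdiff hlip x (x - η • v)
  rw [sub_sub_cancel_left, inner_neg_right, inner_smul_right, norm_neg, norm_smul,
    Real.norm_eq_abs, mul_pow, sq_abs] at h
  calc _ = |f (x - η • v) - f x - -(η * inner ℝ (gradient f x) v)| := by ring_nf
    _ ≤ L / 2 * (η ^ 2 * ‖v‖ ^ 2) := h
    _ = _ := by ring

variable {Ω : Type*} [MeasurableSpace Ω] {μ : Measure Ω} [IsProbabilityMeasure μ]

theorem integral_comp_sub_smul_le (hdiff : ∀ y, DifferentiableAt ℝ f y)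
    (hlip : ∀ y z, ‖gradient f y - gradient f z‖ ≤ L * ‖y - z‖) (x : E) (η : ℝ)
    {g : Ω → E} (hg : MemLp g 2 μ) :
    ∫ ω, f (x - η • g ω) ∂μ ≤
      f x - η * inner ℝ (gradient f x) (∫ ω, g ω ∂μ) + L * η ^ 2 / 2 * ∫ ω, ‖g ω‖ ^ 2 ∂μ := by
  set q : Ω → ℝ := fun ω => f x - η * inner ℝ (gradient f x) (g ω)
  set r : Ω → ℝ := fun ω => L * η ^ 2 / 2 * ‖g ω‖ ^ 2
  have hg1 : Integrable g μ := hg.integrable one_le_two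
  have hq : Integrable q μ :=
    (integrable_const _).sub ((hg1.const_inner (gradient f x)).const_mul η)
  have hr : Integrable r μ := (hg.integrable_norm_pow two_ne_zero).const_mul _
  have hsandwich (ω : Ω) : q ω - r ω ≤ f (x - η • g ω) ∧ f (x - η • g ω) ≤ q ω + r ω := by
    obtain ⟨hlow, hup⟩ := abs_le.1 (abs_comp_sub_smul_sub_le hdiff hlip x (g ω) η)
    simp only [q, r]
    constructor <;> linarith
  have hmeas : AEStronglyMeasurable (fun ω => f (x - η • g ω)) μ :=
    (continuous_iff_continuousAt.2 fun y => (hdiff y).continuousAt).comp_aestronglyMeasurable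
      (aestronglyMeasurable_const.sub (hg1.aestronglyMeasurable.const_smul η))
  -- the lower half of the two-sided bound is what makes `f (x - η • g)` integrable
  have hint : Integrable (fun ω => f (x - η • g ω)) μ :=
    integrable_of_le_of_le hmeas (.of_forall fun ω => (hsandwich ω).1)
      (.of_forall fun ω => (hsandwich ω).2) (hq.sub hr) (hq.add hr)
  calc ∫ ω, f (x - η • g ω) ∂μ ≤ ∫ ω, q ω + r ω ∂μ :=
        integral_mono hint (hq.add hr) fun ω => (hsandwich ω).2
    _ = _ := by
      rw [integral_add hq hr, integral_sub (integrable_const _) ((hg1.const_inner _).const_mul η),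
        integral_const, integral_const_mul, integral_const_mul, integral_inner hg1]
      simp

end LipschitzGradient

theorem one_step_descent_under_es_general {Ω : Type*} [MeasureSpace Ω]
    [IsProbabilityMeasure (ℙ : Measure Ω)] {d : ℕ}
    (f : EuclideanSpace ℝ (Fin d) → ℝ) (L fstar : ℝ) (hL : 0 < L)
    (hdiff : ∀ y, DifferentiableAt ℝ f y)
    (hlip : ∀ y z, ‖gradient f y - gradient f z‖ ≤ L * ‖y - z‖)
    (η : ℝ)
    (A B C : ℝ)
    (x : EuclideanSpace ℝ (Fin d))
    (g : Ω → EuclideanSpace ℝ (Fin d)) (hg2 : MemLp g 2 ℙ)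
    (hunbiased : ∫ ω, g ω = gradient f x)
    (hES : ∫ ω, ‖g ω‖ ^ 2 ≤ 2 * A * (f x - fstar) + B * ‖gradient f x‖ ^ 2 + C) :
    ∫ ω, f (x - η • g ω) ≤
      f x - η * (1 - L * B * η / 2) * ‖gradient f x‖ ^ 2
        + L * A * η ^ 2 * (f x - fstar) + (L * η ^ 2 / 2) * C := by
  calc ∫ ω, f (x - η • g ω)
      ≤ f x - η * inner ℝ (gradient f x) (∫ ω, g ω) + L * η ^ 2 / 2 * ∫ ω, ‖g ω‖ ^ 2 :=
        integral_comp_sub_smul_le hdiff hlip x η hg2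
    _ ≤ f x - η * ‖gradient f x‖ ^ 2
          + L * η ^ 2 / 2 * (2 * A * (f x - fstar) + B * ‖gradient f x‖ ^ 2 + C) := by
        rw [hunbiased, real_inner_self_eq_norm_sq]
        gcongr
    _ = _ := by ring

theorem one_step_descent_under_es {Ω : Type*} [MeasureSpace Ω]
    [IsProbabilityMeasure (ℙ : Measure Ω)] {d : ℕ}
    (f : EuclideanSpace ℝ (Fin d) → ℝ) (L fstar : ℝ) (hL : 0 < L)
    (hdiff : ∀ y, DifferentiableAt ℝ f y)
    (hlip : ∀ y z, ‖gradient f y - gradient f z‖ ≤ L * ‖y - z‖)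
    (hbound : ∀ y, fstar ≤ f y)
    (η : ℝ) (hη : 0 < η)
    (A B C : ℝ) (hA : 0 ≤ A) (hB : 0 ≤ B) (hC : 0 ≤ C)
    (x : EuclideanSpace ℝ (Fin d))
    (g : Ω → EuclideanSpace ℝ (Fin d)) (hg2 : MemLp g 2 ℙ)
    (hunbiased : ∫ ω, g ω = gradient f x)
    (hES : ∫ ω, ‖g ω‖ ^ 2 ≤ 2 * A * (f x - fstar) + B * ‖gradient f x‖ ^ 2 + C) :
    ∫ ω, f (x - η • g ω) ≤
      f x - η * (1 - L * B * η / 2) * ‖gradient f x‖ ^ 2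
        + L * A * η ^ 2 * (f x - fstar) + (L * η ^ 2 / 2) * C :=
  one_step_descent_under_es_general f L fstar hL hdiff hlip η A B C x g hg2 hunbiased hES
end

section
/- Let a_k = E[f(x_k)] − f⋆ and G_k = E‖∇f(x_k)‖². Suppose for all k, η_k(1 − LBη_k/2)G_k ≤ a_k − a_{k+1} + LAη_k² a_k + (L/2)C η_k², with η_k ∈ (0, 2/(LB)) and η_max = sup_k η_k. Then for all K ≥ 1, min_{0≤k≤K} G_k ≤ [2a₀]/[(2 − LBη_max)∑_{k<K} η_k] + [2LA/(2 − LBη_max)]·[∑_{k<K} η_k² a_k / ∑_{k<K} η_k] + [LC/(2 − LBη_max)]·[∑_{k<K} η_k² / ∑_{k<K} η_k]. -/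
theorem sgd_es_convergence_bound
    (L B A C : ℝ) (hL : 0 < L) (hB : 0 < B) (hA : 0 ≤ A) (hC : 0 ≤ C)
    (a G η : ℕ → ℝ) (ha : ∀ k, 0 ≤ a k) (hG : ∀ k, 0 ≤ G k)
    (hη : ∀ k, η k ∈ Set.Ioo 0 (2 / (L * B)))
    (ηmax : ℝ) (hsup : ∀ k, η k ≤ ηmax) (hmax : ηmax < 2 / (L * B))
    (hrec : ∀ k, η k * (1 - L * B * η k / 2) * G k ≤
      a k - a (k + 1) + L * A * (η k) ^ 2 * a k + (L / 2) * C * (η k) ^ 2)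
    (K : ℕ) (hK : 1 ≤ K) :
    (Finset.range (K + 1)).inf' (by simp) G ≤
      2 * a 0 / ((2 - L * B * ηmax) * ∑ k ∈ Finset.range K, η k)
      + (2 * L * A / (2 - L * B * ηmax)) *
          ((∑ k ∈ Finset.range K, (η k) ^ 2 * a k) / ∑ k ∈ Finset.range K, η k)
      + (L * C / (2 - L * B * ηmax)) *
          ((∑ k ∈ Finset.range K, (η k) ^ 2) / ∑ k ∈ Finset.range K, η k) := by
  have hLB : 0 < L * B := mul_pos hL hB
  set m := (Finset.range (K + 1)).inf' (by simp) G with hm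
  have hm0 : 0 ≤ m := Finset.le_inf' _ _ (fun k _ => hG k)
  have hmle : ∀ k < K, m ≤ G k := fun k hk =>
    Finset.inf'_le _ (Finset.mem_range.mpr (by omega))
  have hc : 0 < 1 - L * B * ηmax / 2 := by
    have : L * B * ηmax < 2 := by
      have := (lt_div_iff₀ hLB).mp hmax; linarith [this]
    linarith
  set S := ∑ k ∈ Finset.range K, η k with hS
  set S2 := ∑ k ∈ Finset.range K, (η k) ^ 2 * a k with hS2
  set S3 := ∑ k ∈ Finset.range K, (η k) ^ 2 with hS3
  have hSpos : 0 < S := by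
    apply Finset.sum_pos (fun k _ => (hη k).1)
    exact ⟨0, Finset.mem_range.mpr (by omega)⟩
  -- per-term bound
  have hterm : ∀ k ∈ Finset.range K,
      η k * (1 - L * B * ηmax / 2) * m ≤
      a k - a (k + 1) + L * A * (η k) ^ 2 * a k + (L / 2) * C * (η k) ^ 2 := by
    intro k hk
    have hkK := Finset.mem_range.mp hk
    have h1 : η k * (1 - L * B * ηmax / 2) * m ≤ η k * (1 - L * B * η k / 2) * G k := by
      have hηk := (hη k).1
      have h2 : 1 - L * B * ηmax / 2 ≤ 1 - L * B * η k / 2 := by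
        have := hsup k
        nlinarith
      have h3 : m ≤ G k := hmle k hkK
      have hpos : 0 < 1 - L * B * η k / 2 := lt_of_lt_of_le hc h2
      have := mul_le_mul h2 h3 hm0 hpos.le
      nlinarith [mul_le_mul_of_nonneg_left this hηk.le]
    exact h1.trans (hrec k)
  have hsum := Finset.sum_le_sum hterm
  rw [show (∑ k ∈ Finset.range K, (a k - a (k + 1) + L * A * (η k) ^ 2 * a k
      + (L / 2) * C * (η k) ^ 2)) = (a 0 - a K) + L * A * S2 + (L / 2) * C * S3 by
    rw [hS2, hS3, Finset.mul_sum, Finset.mul_sum, ← Finset.sum_range_sub' a K,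
      ← Finset.sum_add_distrib, ← Finset.sum_add_distrib]
    exact Finset.sum_congr rfl (fun k _ => by ring)] at hsum
  rw [show (∑ k ∈ Finset.range K, η k * (1 - L * B * ηmax / 2) * m)
      = (1 - L * B * ηmax / 2) * m * S by
    rw [hS, Finset.mul_sum]; exact Finset.sum_congr rfl (fun k _ => by ring)] at hsum
  have key : (1 - L * B * ηmax / 2) * m * S ≤ a 0 + L * A * S2 + (L / 2) * C * S3 := by
    have := ha K; linarith
  have hm_le : m ≤ (a 0 + L * A * S2 + (L / 2) * C * S3) / ((1 - L * B * ηmax / 2) * S) := by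
    rw [le_div_iff₀ (mul_pos hc hSpos)]
    nlinarith
  refine hm_le.trans (le_of_eq ?_)
  have h2ne : (2 - L * B * ηmax) ≠ 0 := by linarith
  field_simp
end
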